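/- arXiv:0910.5855 — 6 statements merged into one kernel-verified Lean document; each statement's English description precedes it below -/
import Mathlib

section
/- For real parameters β > 0, γ > 0, δ > 0, a real number ω, and every s > |ω|^{1/β}, the Laplace transform of t ↦ t^{γ-1} E_{β,γ}^{δ}(ω t^{β}) is given by ∫₀^∞ e^{-st} t^{γ-1} E_{β,γ}^{δ}(ω t^{β}) dt = s^{βδ-γ} / (s^{β} - ω)^{δ}. -/
/-!
Expand `E_{β,γ}^δ` in its defining series. The `r`-th term of `t^{γ-1} E_{β,γ}^δ(ω t^β)` is
a multiple of `t^{βr+γ-1}`, whose Laplace transform `Γ(βr+γ) / s^{βr+γ}` cancels the Gamma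
factor of the coefficient. What is left is `s^{-γ} Σ (δ)_r x^r / r!` with `x = ω / s^β`, the
binomial series of `(1 - x)^{-δ}`, which converges because `s > |ω|^{1/β}` means `|x| < 1`. The same
computation with `|ω|` in place of `ω` bounds the integrals of the absolute values of the terms
by a convergent series, which justifies integrating term by term.
-/

open Real MeasureTheory

/-- The generalized Mittag-Leffler function
`E_{α,β}^γ(x) = Σ_{r=0}^∞ (γ)_r x^r / (r! Γ(αr+β))`,
where `(γ)_r = γ(γ+1)⋯(γ+r-1)` is the Pochhammer symbol. -/
noncomputable def gml (α β γ x : ℝ) : ℝ :=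
  ∑' r : ℕ, (∏ i ∈ Finset.range r, (γ + i)) * x ^ r /
    (r.factorial * Real.Gamma (α * r + β))

open Finset Set

theorem ascPochhammer_eval_eq_prod_range {R : Type*} [CommSemiring R] (n : ℕ) (r : R) :
    (ascPochhammer R n).eval r = ∏ j ∈ range n, (r + j) := by
  induction n with
  | zero => simp
  | succ n ih => rw [ascPochhammer_succ_eval, ih, prod_range_succ]

theorem Ring.choose_add_natCast_sub_one {K : Type*} [Field K] [CharZero K] (a : K) (n : ℕ) :
    Ring.choose (a + n - 1) n = (∏ i ∈ range n, (a + i)) / n.factorial := by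
  rw [Ring.choose_eq_smul, smul_eq_mul, inv_mul_eq_div,
    Polynomial.descPochhammer_smeval_eq_ascPochhammer, Polynomial.ascPochhammer_smeval_eq_eval,
    ascPochhammer_eval_eq_prod_range, show a + n - 1 - n + 1 = a by ring]

theorem hasSum_prod_range_add_mul_pow_div_factorial (δ : ℝ) {x : ℝ} (hx : |x| < 1) :
    HasSum (fun n => (∏ i ∈ range n, (δ + i)) * x ^ n / n.factorial) ((1 - x) ^ (-δ)) := by
  have hx' : x ∈ Metric.eball (0 : ℝ) 1 := by
    rwa [← ENNReal.ofReal_one, Metric.eball_ofReal, mem_ball_zero_iff, Real.norm_eq_abs]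
  have h := (one_div_one_sub_rpow_hasFPowerSeriesOnBall_zero δ).hasSum hx'
  rw [zero_add, one_div, ← rpow_neg (by linarith [le_abs_self x])] at h
  refine h.congr_fun fun n => ?_
  rw [FormalMultilinearSeries.ofScalars_apply_eq, Ring.choose_add_natCast_sub_one, smul_eq_mul]
  ring

theorem integral_tsum_mul_rpow_mul_exp_neg_mul_Ioi {a p : ℕ → ℝ} {s : ℝ}
    (hp : ∀ r, 0 < p r) (hs : 0 < s)
    (hsum : Summable fun r => |a r| * ((1 / s) ^ p r * Gamma (p r))) :
    ∫ t in Ioi 0, ∑' r, a r * (t ^ (p r - 1) * exp (-(s * t)))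
      = ∑' r, a r * ((1 / s) ^ p r * Gamma (p r)) := by
  have hint r : IntegrableOn (fun t => t ^ (p r - 1) * exp (-(s * t))) (Ioi 0) :=
    .of_integral_ne_zero <| by
      rw [integral_rpow_mul_exp_neg_mul_Ioi (hp r) hs]
      exact (mul_pos (by positivity) (Gamma_pos_of_pos (hp r))).ne'
  have hnorm r : ∫ t in Ioi 0, ‖a r * (t ^ (p r - 1) * exp (-(s * t)))‖
      = |a r| * ((1 / s) ^ p r * Gamma (p r)) := by
    rw [← integral_rpow_mul_exp_neg_mul_Ioi (hp r) hs, ← integral_const_mul]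
    refine setIntegral_congr_fun measurableSet_Ioi fun t (ht : 0 < t) => ?_
    rw [norm_mul, Real.norm_eq_abs, Real.norm_of_nonneg (by positivity)]
  rw [← integral_tsum_of_summable_integral_norm (fun r => (hint r).const_mul (a r))
    (by simpa only [hnorm] using hsum)]
  simp_rw [integral_const_mul, integral_rpow_mul_exp_neg_mul_Ioi (hp _) hs]

theorem exp_mul_rpow_mul_gml_eq_tsum (β γ δ ω s : ℝ) {t : ℝ} (ht : 0 < t) :
    exp (-(s * t)) * t ^ (γ - 1) * gml β γ δ (ω * t ^ β)
      = ∑' r : ℕ, (∏ i ∈ range r, (δ + i)) * ω ^ r / (r.factorial * Gamma (β * r + γ))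
          * (t ^ (β * r + γ - 1) * exp (-(s * t))) := by
  rw [gml, ← tsum_mul_left]
  refine tsum_congr fun r => ?_
  rw [mul_pow, ← rpow_natCast (t ^ β), ← rpow_mul ht.le,
    show β * r + γ - 1 = γ - 1 + β * r by ring, rpow_add ht]
  ring

theorem gml_coeff_mul_one_div_rpow_mul_Gamma {β γ s : ℝ} (hs : 0 < s) (c ω : ℝ) (r : ℕ)
    (hΓ : Gamma (β * r + γ) ≠ 0) :
    c * ω ^ r / (r.factorial * Gamma (β * r + γ)) * ((1 / s) ^ (β * r + γ) * Gamma (β * r + γ))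
      = c * (ω / s ^ β) ^ r / r.factorial * (1 / s) ^ γ := by
  rw [rpow_add (by positivity), rpow_mul (by positivity), rpow_natCast,
    div_rpow zero_le_one hs.le, one_rpow]
  field_simp
  rw [mul_assoc, ← mul_pow, mul_one_div]

theorem one_sub_div_rpow_neg_mul_one_div_rpow {s ω : ℝ} (β γ δ : ℝ) (hs : 0 < s)
    (hω : ω < s ^ β) :
    (1 - ω / s ^ β) ^ (-δ) * (1 / s) ^ γ = s ^ (β * δ - γ) / (s ^ β - ω) ^ δ := by
  have hsβ : 0 < s ^ β := by positivity
  rw [one_sub_div hsβ.ne', rpow_neg (div_pos (by linarith) hsβ).le,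
    div_rpow (by linarith) hsβ.le, ← rpow_mul hs.le, div_rpow zero_le_one hs.le, one_rpow,
    rpow_sub hs]
  field_simp

/-- Laplace transform of `t ↦ t^{γ-1} E_{β,γ}^δ(ω t^β)`:
for `s > |ω|^{1/β}` it equals `s^{βδ-γ} / (s^β - ω)^δ`. -/
theorem laplace_gml (β γ δ ω : ℝ) (hβ : 0 < β) (hγ : 0 < γ) (hδ : 0 < δ)
    (s : ℝ) (hs : |ω| ^ (1 / β) < s) :
    ∫ t in Set.Ioi (0 : ℝ),
        Real.exp (-(s * t)) * t ^ (γ - 1) * gml β γ δ (ω * t ^ β)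
      = s ^ (β * δ - γ) / (s ^ β - ω) ^ δ := by
  have hs0 : 0 < s := (rpow_nonneg (abs_nonneg ω) _).trans_lt hs
  have hsβ : 0 < s ^ β := rpow_pos_of_pos hs0 β
  have hωs : |ω| < s ^ β :=
    (rpow_inv_lt_iff_of_pos (abs_nonneg ω) hs0.le hβ).mp (by rwa [← one_div])
  have hx : |ω / s ^ β| < 1 := by rwa [abs_div, abs_of_pos hsβ, div_lt_one hsβ]
  have hp (r : ℕ) : 0 < β * r + γ := by positivity
  have hΓ (r : ℕ) : Gamma (β * r + γ) ≠ 0 := (Gamma_pos_of_pos (hp r)).ne'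
  have hsum : Summable fun r : ℕ => |(∏ i ∈ range r, (δ + i)) * ω ^ r /
      (r.factorial * Gamma (β * r + γ))| * ((1 / s) ^ (β * r + γ) * Gamma (β * r + γ)) := by
    refine ((hasSum_prod_range_add_mul_pow_div_factorial δ (x := |ω / s ^ β|)
      (by rwa [abs_abs])).summable.mul_right ((1 / s) ^ γ)).congr fun r => ?_
    rw [abs_div ω, abs_of_pos hsβ, ← gml_coeff_mul_one_div_rpow_mul_Gamma hs0 _ _ r (hΓ r),
      abs_div, abs_mul, abs_mul, abs_pow,
      abs_of_nonneg (prod_nonneg fun i _ => by positivity : 0 ≤ ∏ i ∈ range r, (δ + i)),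
      Nat.abs_cast, abs_of_pos (Gamma_pos_of_pos (hp r))]
  rw [setIntegral_congr_fun measurableSet_Ioi
      fun t ht => exp_mul_rpow_mul_gml_eq_tsum β γ δ ω s ht,
    integral_tsum_mul_rpow_mul_exp_neg_mul_Ioi hp hs0 hsum,
    tsum_congr fun r => gml_coeff_mul_one_div_rpow_mul_Gamma hs0 _ _ r (hΓ r), tsum_mul_right,
    (hasSum_prod_range_add_mul_pow_div_factorial δ hx).tsum_eq]
  exact one_sub_div_rpow_neg_mul_one_div_rpow β γ δ hs0 ((le_abs_self ω).trans_lt hωs)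
end

section
/- For every λ > 0 and every integer k ≥ 0, E_{1/2, k/2 + 1}^{k+1}(-λ) = (1/k!) ∫₀^∞ e^{-λ y} y^{k} e^{-y²/4} / √π dy. -/
/-! Expand `e^{-λy}` in its power series and integrate term by term; this is dominated
convergence, since `e^{|λ| y} y^k e^{-y²/4}` is integrable on `(0, ∞)`. The `r`-th term is the
Gaussian moment `∫₀^∞ y^{k+r} e^{-y²/4} dy = 2^{k+r} Γ((k+r+1)/2)`, which Legendre's duplication
formula turns into `√π (k+r)! / Γ((k+r)/2 + 1)`; together with `(k+1)_r = (k+r)!/k!` this is the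
`r`-th term of `E_{1/2,k/2+1}^{k+1}(-λ) / k!`. -/

open Real MeasureTheory

open scoped Nat
open Set

lemma hasSum_integral_exp_mul {α : Type*} [MeasurableSpace α] {μ : Measure α} {g f : α → ℝ}
    (hg : AEStronglyMeasurable g μ) (hf : AEStronglyMeasurable f μ)
    (hint : Integrable (fun a => exp |g a| * f a) μ) :
    HasSum (fun n : ℕ => ∫ a, g a ^ n / n ! * f a ∂μ) (∫ a, exp (g a) * f a ∂μ) := by
  have hexp (x : ℝ) : HasSum (fun n : ℕ => x ^ n / n !) (exp x) := by
    simpa only [Real.exp_eq_exp_ℝ] using NormedSpace.expSeries_div_hasSum_exp x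
  refine hasSum_integral_of_dominated_convergence (fun n a => |g a| ^ n / n ! * |f a|)
    (fun n => by fun_prop) (fun n => ae_of_all _ fun a => ?_)
    (ae_of_all _ fun a => ((hexp |g a|).mul_right |f a|).summable) ?_
    (ae_of_all _ fun a => (hexp (g a)).mul_right (f a))
  · simp
  · simpa only [((hexp _).mul_right _).tsum_eq, norm_mul, Real.norm_eq_abs, abs_of_pos (exp_pos _)]
      using hint.norm

lemma integral_pow_mul_exp_neg_sq_div_four (n : ℕ) :
    ∫ y in Ioi (0 : ℝ), y ^ n * exp (-(y ^ 2 / 4)) = 2 ^ n * Gamma ((n + 1) / 2) := by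
  have h := integral_rpow_mul_exp_neg_mul_rpow (p := 2) (q := n) (b := 1 / 4) two_pos
    (by linarith [n.cast_nonneg (α := ℝ)]) (by norm_num)
  have hfour : (1 / 4 : ℝ) ^ (-((n : ℝ) + 1) / 2) = 2 ^ (n + 1) := by
    rw [show (1 / 4 : ℝ) = 2 ^ (-2 : ℝ) by norm_num, ← rpow_mul zero_le_two, ← rpow_natCast]
    push_cast
    ring_nf
  simp only [rpow_two, rpow_natCast, hfour] at h
  calc ∫ y in Ioi (0 : ℝ), y ^ n * exp (-(y ^ 2 / 4))
      = ∫ y in Ioi (0 : ℝ), y ^ n * exp (-(1 / 4) * y ^ 2) := by ring_nf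
    _ = 2 ^ n * Gamma ((n + 1) / 2) := by rw [h]; ring

lemma Gamma_succ_div_two_mul_Gamma_div_two_add_one (n : ℕ) :
    Gamma ((n + 1) / 2) * Gamma (n / 2 + 1) = n ! * √π / 2 ^ n := by
  have h := Gamma_mul_Gamma_add_half ((n + 1) / 2)
  rw [show ((n : ℝ) + 1) / 2 + 1 / 2 = n / 2 + 1 by ring,
    show 2 * (((n : ℝ) + 1) / 2) = n + 1 by ring, Gamma_nat_eq_factorial,
    show 1 - ((n : ℝ) + 1) = -n by ring, rpow_neg zero_le_two, rpow_natCast] at h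
  rw [h, div_eq_mul_inv]
  ring

lemma integral_pow_mul_exp_neg_sq_div_four_div_sqrt_pi (n : ℕ) :
    ∫ y in Ioi (0 : ℝ), y ^ n * exp (-(y ^ 2 / 4)) / √π = n ! / Gamma (n / 2 + 1) := by
  have hΓ : 0 < Gamma (n / 2 + 1) := Gamma_pos_of_pos (by positivity)
  rw [integral_div, integral_pow_mul_exp_neg_sq_div_four, div_eq_div_iff (by positivity) hΓ.ne',
    mul_assoc, Gamma_succ_div_two_mul_Gamma_div_two_add_one]
  field_simp

lemma integrableOn_exp_mul_mul_pow_mul_exp_neg_sq_div_four (c : ℝ) (n : ℕ) :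
    IntegrableOn (fun y => exp (c * y) * (y ^ n * exp (-(y ^ 2 / 4)))) (Ioi 0) := by
  have hdom := (integrableOn_rpow_mul_exp_neg_mul_sq (b := 1 / 8) (by norm_num)
    (s := n) (by linarith [n.cast_nonneg (α := ℝ)])).const_mul (exp (2 * c ^ 2))
  refine hdom.mono' (by fun_prop) ?_
  filter_upwards [ae_restrict_mem measurableSet_Ioi] with y (hy : 0 < y)
  -- `c y - y²/4 ≤ 2c² - y²/8` is `2 (c - y/4)² ≥ 0`
  have hexponent : c * y + -(y ^ 2 / 4) ≤ 2 * c ^ 2 + -(1 / 8) * y ^ 2 := by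
    nlinarith [sq_nonneg (y - 4 * c)]
  rw [Real.norm_eq_abs, abs_of_nonneg (by positivity), rpow_natCast]
  calc exp (c * y) * (y ^ n * exp (-(y ^ 2 / 4)))
      = y ^ n * exp (c * y + -(y ^ 2 / 4)) := by rw [exp_add]; ring
    _ ≤ y ^ n * exp (2 * c ^ 2 + -(1 / 8) * y ^ 2) := by gcongr
    _ = exp (2 * c ^ 2) * (y ^ n * exp (-(1 / 8) * y ^ 2)) := by rw [exp_add]; ring

lemma prod_range_natCast_add_one_add (k r : ℕ) :
    ∏ i ∈ Finset.range r, ((k : ℝ) + 1 + i) = (k + r)! / k ! := by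
  rw [eq_div_iff (by positivity), ← Nat.factorial_mul_ascFactorial,
    Nat.ascFactorial_eq_prod_range]
  push_cast
  ring

theorem gml_half_eq_gaussian_integral_general (lam : ℝ) (k : ℕ) :
    gml (1 / 2) ((k : ℝ) / 2 + 1) (k + 1) (-lam)
      = (1 / (k.factorial : ℝ)) *
          ∫ y in Set.Ioi (0 : ℝ),
            Real.exp (-(lam * y)) * y ^ k * Real.exp (-(y ^ 2 / 4)) /
              Real.sqrt π := by
  set f : ℝ → ℝ := fun y => y ^ k * exp (-(y ^ 2 / 4)) / √π
  have hint : IntegrableOn (fun y => exp |-(lam * y)| * f y) (Ioi 0) :=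
    IntegrableOn.congr_fun
      ((integrableOn_exp_mul_mul_pow_mul_exp_neg_sq_div_four |lam| k).div_const √π)
      (fun y (hy : 0 < y) => by simp only [f, abs_neg, abs_mul, abs_of_pos hy]; ring)
      measurableSet_Ioi
  have hseries := hasSum_integral_exp_mul (by fun_prop) (by fun_prop) hint
  have hterm (r : ℕ) : ∫ y in Ioi 0, (-(lam * y)) ^ r / r ! * f y
      = (-lam) ^ r / r ! * ((k + r)! / Gamma ((k + r : ℕ) / 2 + 1)) := by
    rw [← integral_pow_mul_exp_neg_sq_div_four_div_sqrt_pi, ← integral_const_mul]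
    congr 1 with y
    simp only [f]
    ring
  have hintegrand (y : ℝ) :
      exp (-(lam * y)) * y ^ k * exp (-(y ^ 2 / 4)) / √π = exp (-(lam * y)) * f y := by
    simp only [f]
    ring
  simp only [hintegrand]
  rw [← hseries.tsum_eq, gml, ← tsum_mul_left]
  refine tsum_congr fun r => ?_
  rw [hterm, prod_range_natCast_add_one_add]
  push_cast
  field_simp
  ring_nf

/-- For `λ > 0` and `k ≥ 0`:
`E_{1/2,k/2+1}^{k+1}(-λ) = (1/k!) ∫₀^∞ e^{-λy} y^k e^{-y²/4}/√π dy`. -/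
theorem gml_half_eq_gaussian_integral (lam : ℝ) (hlam : 0 < lam) (k : ℕ) :
    gml (1 / 2) ((k : ℝ) / 2 + 1) (k + 1) (-lam)
      = (1 / (k.factorial : ℝ)) *
          ∫ y in Set.Ioi (0 : ℝ),
            Real.exp (-(lam * y)) * y ^ k * Real.exp (-(y ^ 2 / 4)) /
              Real.sqrt π :=
  gml_half_eq_gaussian_integral_general lam k
end

section
/- For every ν ∈ (0,1], λ > 0, t > 0 and every integer k ≥ 1, the following identity between generalized Mittag-Leffler functions holds: λ^{k} t^{νk} E_{ν, νk+1}^{k}(-λ t^{ν}) - λ^{k+1} t^{ν(k+1)} E_{ν, ν(k+1)+1}^{k+1}(-λ t^{ν}) = (λ t^{ν})^{k} E_{ν, νk+1}^{k+1}(-λ t^{ν}). -/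
open Real

/-!
Termwise, `(γ + 1)_{r+1} - (γ)_{r+1} = (r + 1) (γ + 1)_r`, which gives the contiguous relation
`E^{γ+1}_{α,β}(x) = E^γ_{α,β}(x) + x E^{γ+1}_{α,α+β}(x)` as soon as both series on the right
converge; with `x = -λ t^ν`, `γ = k` and `β = νk + 1` this is the identity. Convergence comes from
the ratio test: log-convexity of `Γ` gives `Γ(y) / Γ(y + ν) = O(y^{-ν})` for `0 < ν ≤ 1`.
-/

open Filter Topology Finset

namespace Real

lemma Gamma_add_one_le_Gamma_add_mul_rpow {ν y : ℝ} (hν : 0 < ν) (hν1 : ν ≤ 1) (hy : 0 < y) :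
    Gamma (y + 1) ≤ Gamma (y + ν) * (y + ν) ^ (1 - ν) := by
  have hyν : 0 < y + ν := by linarith
  rcases hν1.eq_or_lt with rfl | hν1
  · simp
  -- `y + 1` is the convex combination `ν (y + ν) + (1 - ν) (y + ν + 1)`
  have h := Gamma_mul_add_mul_le_rpow_Gamma_mul_rpow_Gamma hyν (by linarith : 0 < y + ν + 1) hν
    (by linarith : 0 < 1 - ν) (add_sub_cancel ν 1)
  rw [show ν * (y + ν) + (1 - ν) * (y + ν + 1) = y + 1 by ring, Gamma_add_one hyν.ne',
    mul_rpow hyν.le (Gamma_pos_of_pos hyν).le] at h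
  calc Gamma (y + 1) ≤ Gamma (y + ν) ^ ν * ((y + ν) ^ (1 - ν) * Gamma (y + ν) ^ (1 - ν)) := h
    _ = Gamma (y + ν) * (y + ν) ^ (1 - ν) := by
      rw [mul_left_comm, ← rpow_add (Gamma_pos_of_pos hyν), add_sub_cancel, rpow_one, mul_comm]

lemma Gamma_div_Gamma_add_le {ν y : ℝ} (hν : 0 < ν) (hν1 : ν ≤ 1) (hνy : ν ≤ y) :
    Gamma y / Gamma (y + ν) ≤ 2 * (y + ν) ^ (-ν) := by
  have hy : 0 < y := hν.trans_le hνy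
  have hyν : 0 < y + ν := by linarith
  have h := Gamma_add_one_le_Gamma_add_mul_rpow hν hν1 hy
  rw [Gamma_add_one hy.ne', show 1 - ν = -ν + 1 by ring, rpow_add_one hyν.ne'] at h
  rw [div_le_iff₀ (Gamma_pos_of_pos hyν)]
  have hc : 0 ≤ Gamma (y + ν) * (y + ν) ^ (-ν) :=
    mul_nonneg (Gamma_pos_of_pos hyν).le (rpow_nonneg hyν.le _)
  refine le_of_mul_le_mul_left ?_ hy
  nlinarith

lemma tendsto_Gamma_div_Gamma_add_atTop {ν : ℝ} (hν : 0 < ν) (hν1 : ν ≤ 1) :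
    Tendsto (fun y ↦ Gamma y / Gamma (y + ν)) atTop (𝓝 0) := by
  have hbound : Tendsto (fun y ↦ 2 * (y + ν) ^ (-ν)) atTop (𝓝 0) := by
    simpa using ((tendsto_rpow_neg_atTop hν).comp
      (tendsto_atTop_add_const_right _ ν tendsto_id)).const_mul 2
  refine squeeze_zero' ?_ ?_ hbound
  · filter_upwards [eventually_gt_atTop 0] with y hy
    exact div_nonneg (Gamma_pos_of_pos hy).le (Gamma_pos_of_pos (by linarith)).le
  · filter_upwards [eventually_ge_atTop ν] with y hy
    exact Gamma_div_Gamma_add_le hν hν1 hy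

end Real

noncomputable def gmlTerm (α β γ x : ℝ) (r : ℕ) : ℝ :=
  (∏ i ∈ range r, (γ + i)) * x ^ r / (r.factorial * Gamma (α * r + β))

lemma gml_eq_tsum_gmlTerm (α β γ x : ℝ) : gml α β γ x = ∑' r, gmlTerm α β γ x r := rfl

lemma gmlTerm_succ (α β γ x : ℝ) {r : ℕ} (hr : Gamma (α * r + β) ≠ 0) :
    gmlTerm α β γ x (r + 1) =
      (γ + r) / (r + 1) * x * (Gamma (α * r + β) / Gamma (α * r + β + α)) * gmlTerm α β γ x r := by
  unfold gmlTerm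
  rw [show α * ((r + 1 : ℕ) : ℝ) + β = α * r + β + α by push_cast; ring, prod_range_succ, pow_succ,
    Nat.factorial_succ, Nat.cast_mul, Nat.cast_succ]
  generalize α * r + β = y at hr ⊢
  field_simp

lemma abs_add_natCast_div_le (γ : ℝ) (r : ℕ) : |γ + r| / (r + 1) ≤ |γ| + 1 := by
  rw [div_le_iff₀ (by positivity)]
  have := abs_add_le γ r
  rw [Nat.abs_cast] at this
  nlinarith [abs_nonneg γ, (Nat.cast_nonneg r : (0 : ℝ) ≤ r)]

lemma summable_gmlTerm {ν : ℝ} (hν : 0 < ν) (hν1 : ν ≤ 1) (β γ x : ℝ) :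
    Summable (gmlTerm ν β γ x) := by
  have hy : Tendsto (fun r : ℕ ↦ ν * r + β) atTop atTop :=
    tendsto_atTop_add_const_right _ β (tendsto_natCast_atTop_atTop.const_mul_atTop hν)
  have hc : Tendsto (fun r : ℕ ↦ (|γ| + 1) * |x| * (Gamma (ν * r + β) / Gamma (ν * r + β + ν)))
      atTop (𝓝 0) := by
    simpa using ((tendsto_Gamma_div_Gamma_add_atTop hν hν1).comp hy).const_mul ((|γ| + 1) * |x|)
  refine summable_of_ratio_norm_eventually_le (r := 1 / 2) (by norm_num) ?_
  filter_upwards [hy.eventually_gt_atTop 0, hc.eventually_le_const (by norm_num : (0 : ℝ) < 1 / 2)]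
    with r hr hcr
  rw [gmlTerm_succ ν β γ x (Gamma_pos_of_pos hr).ne']
  simp only [norm_mul, norm_div, Real.norm_eq_abs]
  rw [abs_of_pos (Gamma_pos_of_pos hr), abs_of_pos (Gamma_pos_of_pos (by linarith)),
    abs_of_pos (by positivity : (0 : ℝ) < r + 1)]
  gcongr
  refine le_trans ?_ hcr
  gcongr
  exact abs_add_natCast_div_le γ r

lemma prod_range_succ_add_one_sub (γ : ℝ) (r : ℕ) :
    ∏ i ∈ range (r + 1), (γ + 1 + i) - ∏ i ∈ range (r + 1), (γ + i) =
      (r + 1) * ∏ i ∈ range r, (γ + 1 + i) := by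
  rw [prod_range_succ, prod_range_succ']
  simp only [Nat.cast_add, Nat.cast_one, Nat.cast_zero, add_zero, ← add_assoc, add_right_comm γ _ 1]
  ring

lemma gmlTerm_add_one_succ (α β γ x : ℝ) (r : ℕ) :
    gmlTerm α β (γ + 1) x (r + 1) =
      gmlTerm α β γ x (r + 1) + x * gmlTerm α (α + β) (γ + 1) x r := by
  have h := prod_range_succ_add_one_sub γ r
  simp only [gmlTerm, Nat.factorial_succ, pow_succ]
  rw [show α * ((r + 1 : ℕ) : ℝ) + β = α * r + (α + β) by push_cast; ring, sub_eq_iff_eq_add.mp h]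
  push_cast
  field_simp
  ring

lemma gml_add_one {α β γ x : ℝ} (h₁ : Summable (gmlTerm α β γ x))
    (h₂ : Summable (gmlTerm α (α + β) (γ + 1) x)) :
    gml α β (γ + 1) x = gml α β γ x + x * gml α (α + β) (γ + 1) x := by
  have h₀ : gmlTerm α β (γ + 1) x 0 = gmlTerm α β γ x 0 := by simp [gmlTerm]
  have h₁' := (hasSum_nat_add_iff' 1).mpr h₁.hasSum
  rw [sum_range_one, ← h₀] at h₁'
  simp only [gml_eq_tsum_gmlTerm]
  refine HasSum.tsum_eq ((hasSum_nat_add_iff' 1).mp ?_)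
  rw [sum_range_one, add_sub_right_comm]
  simpa only [gmlTerm_add_one_succ] using h₁'.add (h₂.hasSum.mul_left x)

theorem gml_difference_identity_general (ν lam t : ℝ) (hν : 0 < ν) (hν1 : ν ≤ 1)
    (ht : 0 < t) (k : ℕ) :
    lam ^ k * t ^ (ν * k) * gml ν (ν * k + 1) k (-(lam * t ^ ν))
      - lam ^ (k + 1) * t ^ (ν * (k + 1)) *
          gml ν (ν * (k + 1) + 1) (k + 1) (-(lam * t ^ ν))
      = (lam * t ^ ν) ^ k * gml ν (ν * k + 1) (k + 1) (-(lam * t ^ ν)) := by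
  have hpow (n : ℕ) : lam ^ n * t ^ (ν * n) = (lam * t ^ ν) ^ n := by
    rw [rpow_mul ht.le, rpow_natCast, mul_pow]
  have hpow' : lam ^ (k + 1) * t ^ (ν * (k + 1)) = (lam * t ^ ν) ^ (k + 1) := by
    exact_mod_cast hpow (k + 1)
  have hrec := gml_add_one (summable_gmlTerm hν hν1 (ν * k + 1) k (-(lam * t ^ ν)))
    (summable_gmlTerm hν hν1 (ν + (ν * k + 1)) (k + 1) (-(lam * t ^ ν)))
  rw [show ν * ((k : ℝ) + 1) + 1 = ν + (ν * k + 1) by ring, hpow, hpow', hrec]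
  ring

/-- For `ν ∈ (0,1]`, `λ > 0`, `t > 0` and `k ≥ 1`:
`λ^k t^{νk} E_{ν,νk+1}^k(-λ t^ν) - λ^{k+1} t^{ν(k+1)} E_{ν,ν(k+1)+1}^{k+1}(-λ t^ν)
 = (λ t^ν)^k E_{ν,νk+1}^{k+1}(-λ t^ν)`. -/
theorem gml_difference_identity (ν lam t : ℝ) (hν : 0 < ν) (hν1 : ν ≤ 1)
    (hlam : 0 < lam) (ht : 0 < t) (k : ℕ) (hk : 1 ≤ k) :
    lam ^ k * t ^ (ν * k) * gml ν (ν * k + 1) k (-(lam * t ^ ν))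
      - lam ^ (k + 1) * t ^ (ν * (k + 1)) *
          gml ν (ν * (k + 1) + 1) (k + 1) (-(lam * t ^ ν))
      = (lam * t ^ ν) ^ k * gml ν (ν * k + 1) (k + 1) (-(lam * t ^ ν)) :=
  gml_difference_identity_general ν lam t hν hν1 ht k
end

section
/- For every ν ∈ (0,1], λ > 0, t > 0 and every integer r ≥ 1, the r-th factorial moment of the distribution p_k^{ν}(t) = (λ t^{ν})^{k} E_{ν, νk+1}^{k+1}(-λ t^{ν}) satisfies Σ_{k=0}^∞ k(k-1)⋯(k-r+1) · (λ t^{ν})^{k} E_{ν, νk+1}^{k+1}(-λ t^{ν}) = (λ t^{ν})^{r} · r! / Γ(νr + 1). -/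
/-!
Write `X = λ t^ν`. Expanding each Mittag-Leffler function turns the moment series into the double
series `∑_{k,j} (k)_r C(k+j, j) (-1)^j X^(k+j) / Γ(ν(k+j)+1)`. Since `Γ(x+1) ≥ a^x e^(-a)` for
every `a ≥ 0`, the Gamma factor beats every geometric growth, so for `ν > 0` the double series
converges absolutely and may be summed along the diagonals `k + j = n`. The `n`-th diagonal
contributes `Δⁿf(0) · X^n / Γ(νn+1)` with `f(k) = (k)_r`, and `Δⁿf(0)` is `r!` for `n = r` and `0`
otherwise.
-/

open Real

open Finset MeasureTheory

theorem prod_range_natCast_add_one_add_s9 {R : Type*} [CommSemiring R] (k j : ℕ) :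
    ∏ i ∈ range j, ((k : R) + 1 + i) = j.factorial * (k + j).choose j := by
  rw_mod_cast [← Nat.ascFactorial_eq_factorial_mul_choose, Nat.ascFactorial_eq_prod_range]

theorem fwdDiff_iter_descFactorial_zero {R : Type*} [CommRing R] (r n : ℕ) :
    (fwdDiff 1)^[n] (fun k : ℕ => (k.descFactorial r : R)) 0 =
      if n = r then (r.factorial : R) else 0 := by
  have h := congrArg (Int.cast : ℤ → R) (fwdDiff_iter_choose_zero r n)
  rw [fwdDiff_iter_eq_sum_shift] at h ⊢
  simp only [Nat.descFactorial_eq_factorial_mul_choose, zsmul_eq_mul, smul_eq_mul, zero_add,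
    mul_one] at h ⊢
  push_cast at h ⊢
  simp_rw [mul_left_comm _ (r.factorial : R), ← mul_sum, h, mul_ite, mul_one, mul_zero]

theorem sum_antidiagonal_mul_choose_mul_neg_one_pow {R : Type*} [CommRing R] (f g : ℕ → R)
    (n : ℕ) :
    ∑ p ∈ antidiagonal n, f p.1 * ((p.1 + p.2).choose p.2 * (-1) ^ p.2 * g (p.1 + p.2)) =
      (fwdDiff 1)^[n] f 0 * g n := by
  rw [Nat.sum_antidiagonal_eq_sum_range_succ_mk, fwdDiff_iter_eq_sum_shift, sum_mul]
  refine sum_congr rfl fun k hk => ?_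
  have hkn : k ≤ n := Nat.lt_succ_iff.1 (mem_range.1 hk)
  rw [Nat.add_sub_cancel' hkn, Nat.choose_symm hkn, zsmul_eq_mul, smul_eq_mul, mul_one, zero_add]
  push_cast
  ring

theorem tsum_prod_eq_tsum_sum_antidiagonal {A α : Type*} [AddCommMonoid A] [HasAntidiagonal A]
    [AddCommMonoid α] [TopologicalSpace α] [ContinuousAdd α] [T3Space α] {f : A × A → α}
    (hf : Summable f) : ∑' p, f p = ∑' n, ∑ p ∈ antidiagonal n, f p := by
  let e := HasAntidiagonal.sigmaAntidiagonalEquivProd (A := A)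
  rw [← e.tsum_eq, Summable.tsum_sigma' (f := fun c => f (e c))
    (fun n => (hasSum_fintype _).summable) (e.summable_iff.2 hf)]
  simp [e, tsum_fintype, sum_attach _ f]

theorem Real.rpow_mul_exp_neg_le_Gamma_add_one {a x : ℝ} (ha : 0 ≤ a) (hx : 0 ≤ x) :
    a ^ x * exp (-a) ≤ Gamma (x + 1) := by
  have hint := GammaIntegral_convergent (s := x + 1) (by linarith)
  rw [add_sub_cancel_right] at hint
  rw [Gamma_eq_integral (by linarith), add_sub_cancel_right, ← integral_exp_neg_Ioi,
    ← integral_const_mul]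
  calc ∫ t in Set.Ioi a, a ^ x * exp (-t)
      ≤ ∫ t in Set.Ioi a, exp (-t) * t ^ x := by
        refine setIntegral_mono_on ((integrableOn_exp_neg_Ioi a).const_mul _)
          (hint.mono_set (Set.Ioi_subset_Ioi ha)) measurableSet_Ioi fun t ht => ?_
        rw [mul_comm]
        exact mul_le_mul_of_nonneg_left (rpow_le_rpow ha (le_of_lt ht) hx) (exp_pos _).le
    _ ≤ ∫ t in Set.Ioi 0, exp (-t) * t ^ x :=
        setIntegral_mono_set hint (ae_restrict_of_forall_mem measurableSet_Ioi fun t ht =>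
          mul_nonneg (exp_pos _).le (rpow_nonneg (le_of_lt ht) _))
          (Set.Ioi_subset_Ioi ha).eventuallyLE

theorem exists_pow_div_Gamma_mul_add_one_le {ν : ℝ} (hν : 0 < ν) {M : ℝ} (hM : 0 ≤ M) :
    ∃ K, ∀ n : ℕ, M ^ n / Gamma (ν * n + 1) ≤ K * 2⁻¹ ^ n := by
  set a := (2 * M + 1) ^ ν⁻¹
  refine ⟨exp a, fun n => ?_⟩
  have hM' : 0 < 2 * M + 1 := by linarith
  have ha_pow : a ^ (ν * n) = (2 * M + 1) ^ n := by
    rw [← rpow_mul hM'.le, inv_mul_cancel_left₀ hν.ne', rpow_natCast]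
  have hGamma : (2 * M + 1) ^ n * exp (-a) ≤ Gamma (ν * n + 1) :=
    ha_pow ▸ rpow_mul_exp_neg_le_Gamma_add_one (by positivity) (by positivity)
  calc M ^ n / Gamma (ν * n + 1) ≤ M ^ n / ((2 * M + 1) ^ n * exp (-a)) := by gcongr
    _ = exp a * (M / (2 * M + 1)) ^ n := by rw [exp_neg, div_pow]; field_simp
    _ ≤ exp a * 2⁻¹ ^ n := by
        gcongr
        rw [div_le_iff₀ hM']
        linarith

theorem pow_mul_gml_eq_tsum (ν X : ℝ) (k : ℕ) :
    X ^ k * gml ν (ν * k + 1) (k + 1) (-X) =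
      ∑' j : ℕ, (k + j).choose j * (-1) ^ j * (X ^ (k + j) / Gamma (ν * (k + j : ℕ) + 1)) := by
  rw [gml, ← tsum_mul_left]
  refine tsum_congr fun j => ?_
  rw [prod_range_natCast_add_one_add_s9, show ν * j + (ν * k + 1) = ν * (k + j : ℕ) + 1 by
    push_cast; ring, neg_pow, pow_add]
  field_simp

theorem summable_mul_choose_mul_pow_div_Gamma {ν : ℝ} (hν : 0 < ν) (X : ℝ) {f : ℕ → ℝ}
    {C B : ℝ} (hf : ∀ k, |f k| ≤ C * B ^ k) :
    Summable fun p : ℕ × ℕ => f p.1 * ((p.1 + p.2).choose p.2 * (-1) ^ p.2 *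
      (X ^ (p.1 + p.2) / Gamma (ν * (p.1 + p.2 : ℕ) + 1))) := by
  obtain ⟨K, hK⟩ :=
    exists_pow_div_Gamma_mul_add_one_le hν (M := 2 * (|B| + 1) * |X|) (by positivity)
  have hgeom : Summable fun n : ℕ => (2⁻¹ : ℝ) ^ n :=
    summable_geometric_of_lt_one (by norm_num) (by norm_num)
  refine Summable.of_norm_bounded
    ((hgeom.mul_of_nonneg hgeom (fun _ => by positivity) fun _ => by positivity).mul_left (|C| * K))
    fun ⟨k, j⟩ => ?_
  have hΓ : 0 < Gamma (ν * (k + j : ℕ) + 1) := Gamma_pos_of_pos (by positivity)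
  have hfk : |f k| ≤ |C| * (|B| + 1) ^ (k + j) :=
    calc |f k| ≤ C * B ^ k := hf k
      _ ≤ |C| * |B| ^ k := by rw [← abs_pow, ← abs_mul]; exact le_abs_self _
      _ ≤ |C| * (|B| + 1) ^ (k + j) := by
        gcongr
        exact (pow_le_pow_left₀ (abs_nonneg B) (by linarith) k).trans
          (pow_le_pow_right₀ (by linarith [abs_nonneg B]) (by omega))
  have hchoose : ((k + j).choose j : ℝ) ≤ 2 ^ (k + j) := by
    exact_mod_cast Nat.choose_le_two_pow _ _
  calc ‖f k * ((k + j).choose j * (-1) ^ j * (X ^ (k + j) / Gamma (ν * (k + j : ℕ) + 1)))‖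
      = |f k| * ((k + j).choose j * (|X| ^ (k + j) / Gamma (ν * (k + j : ℕ) + 1))) := by
        simp only [norm_mul, norm_div, norm_pow, norm_neg, norm_one, one_pow, mul_one,
          Real.norm_eq_abs, abs_of_pos hΓ, Nat.abs_cast]
    _ ≤ (|C| * (|B| + 1) ^ (k + j)) * (2 ^ (k + j) *
          (|X| ^ (k + j) / Gamma (ν * (k + j : ℕ) + 1))) := by gcongr
    _ = |C| * ((2 * (|B| + 1) * |X|) ^ (k + j) / Gamma (ν * (k + j : ℕ) + 1)) := by
        rw [mul_pow, mul_pow]; ring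
    _ ≤ |C| * (K * 2⁻¹ ^ (k + j)) := by gcongr; exact hK _
    _ = |C| * K * (2⁻¹ ^ k * 2⁻¹ ^ j) := by rw [pow_add]; ring

theorem tsum_mul_pow_mul_gml_eq_tsum_fwdDiff {ν : ℝ} (hν : 0 < ν) (X : ℝ) {f : ℕ → ℝ}
    {C B : ℝ} (hf : ∀ k, |f k| ≤ C * B ^ k) :
    ∑' k : ℕ, f k * (X ^ k * gml ν (ν * k + 1) (k + 1) (-X)) =
      ∑' n : ℕ, (fwdDiff 1)^[n] f 0 * (X ^ n / Gamma (ν * n + 1)) := by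
  have hF := summable_mul_choose_mul_pow_div_Gamma hν X hf
  calc ∑' k : ℕ, f k * (X ^ k * gml ν (ν * k + 1) (k + 1) (-X))
      = ∑' k : ℕ, ∑' j : ℕ, f k * ((k + j).choose j * (-1) ^ j *
          (X ^ (k + j) / Gamma (ν * (k + j : ℕ) + 1))) := by
        simp_rw [pow_mul_gml_eq_tsum, ← tsum_mul_left]
    _ = ∑' p : ℕ × ℕ, f p.1 * ((p.1 + p.2).choose p.2 * (-1) ^ p.2 *
          (X ^ (p.1 + p.2) / Gamma (ν * (p.1 + p.2 : ℕ) + 1))) :=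
        (hF.tsum_prod' hF.prod_factor).symm
    _ = ∑' n : ℕ, (fwdDiff 1)^[n] f 0 * (X ^ n / Gamma (ν * n + 1)) := by
        rw [tsum_prod_eq_tsum_sum_antidiagonal hF]
        exact tsum_congr (sum_antidiagonal_mul_choose_mul_neg_one_pow f
          fun n => X ^ n / Gamma (ν * n + 1))

theorem abs_descFactorial_le (k r : ℕ) : |(k.descFactorial r : ℝ)| ≤ r.factorial * 2 ^ k := by
  rw [Nat.abs_cast, Nat.descFactorial_eq_factorial_mul_choose]
  exact_mod_cast Nat.mul_le_mul_left _ (Nat.choose_le_two_pow k r)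

theorem fractional_poisson_factorial_moments_general (ν lam t : ℝ) (hν : 0 < ν) (r : ℕ) :
    ∑' k : ℕ, (∏ i ∈ Finset.range r, ((k : ℝ) - i)) *
        ((lam * t ^ ν) ^ k * gml ν (ν * k + 1) (k + 1) (-(lam * t ^ ν)))
      = (lam * t ^ ν) ^ r * r.factorial / Real.Gamma (ν * r + 1) := by
  simp_rw [prod_range_natCast_sub, ← Nat.descFactorial_eq_prod_range,
    tsum_mul_pow_mul_gml_eq_tsum_fwdDiff hν _ (abs_descFactorial_le · r),
    fwdDiff_iter_descFactorial_zero, ite_mul, zero_mul]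
  rw [tsum_ite_eq]
  ring

/-- For `ν ∈ (0,1]`, `λ > 0`, `t > 0` and `r ≥ 1`: the `r`-th factorial moment of
`p_k^ν(t) = (λt^ν)^k E_{ν,νk+1}^{k+1}(-λt^ν)` equals `(λt^ν)^r r! / Γ(νr+1)`.
Here `k(k-1)⋯(k-r+1)` is the falling factorial `∏_{i<r} (k-i)`. -/
theorem fractional_poisson_factorial_moments (ν lam t : ℝ) (hν : 0 < ν)
    (hν1 : ν ≤ 1) (hlam : 0 < lam) (ht : 0 < t) (r : ℕ) (hr : 1 ≤ r) :
    ∑' k : ℕ, (∏ i ∈ Finset.range r, ((k : ℝ) - i)) *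
        ((lam * t ^ ν) ^ k * gml ν (ν * k + 1) (k + 1) (-(lam * t ^ ν)))
      = (lam * t ^ ν) ^ r * r.factorial / Real.Gamma (ν * r + 1) :=
  fractional_poisson_factorial_moments_general ν lam t hν r
end

section
/- For every ν ∈ (0,1], λ > 0, t > 0 and every u with 0 < u ≤ 1, the probability generating function of the second-type fractional Poisson distribution p̂_k^{ν}(t) = λ^{2k} t^{2kν} E_{ν, 2kν+1}^{2k+1}(-λ t^{ν}) + λ^{2k+1} t^{(2k+1)ν} E_{ν, (2k+1)ν+1}^{2k+2}(-λ t^{ν}) satisfies Σ_{k=0}^∞ u^{k} p̂_k^{ν}(t) = ((√u + 1)/(2√u)) · E_{ν,1}(-λ(1 - √u) t^{ν}) + ((√u - 1)/(2√u)) · E_{ν,1}(-λ(1 + √u) t^{ν}). -/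
/-!
Put `x = λ t^ν` and `a n = x^n E_{ν,nν+1}^{n+1}(-x)`, so that `p̂_k = a (2k) + a (2k+1)`.
For every real `z`, `Σ z^n a n = E_{ν,1}(-x(1-z))`: since
`E_{ν,nν+1}^{n+1}(y) = Σ_r C(n+r,n) y^r / Γ(ν(n+r)+1)`, regrouping the double series along
`n + r = m` gives the binomial expansion of `Σ_m (zx - x)^m / Γ(νm+1)`. The regrouping is
justified by absolute convergence, i.e. by the convergence of `E_{ν,1}` on all of `ℝ`, which is a
ratio test based on `Γ(y+ν) ≥ (y-1)^ν Γ(y)` (log-convexity of `Γ`). The generating function is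
then the combination of the cases `z = √u` and `z = -√u` that keeps `u^k (a (2k) + a (2k+1))`.
-/

open Real

/-- The two-parameter Mittag-Leffler function `E_{α,β}(x) = Σ_{r=0}^∞ x^r / Γ(αr+β)`. -/
noncomputable def ml (α β x : ℝ) : ℝ :=
  ∑' r : ℕ, x ^ r / Real.Gamma (α * r + β)

open Filter Finset

theorem Real.Gamma_mul_rpow_le_Gamma_add {x ν : ℝ} (hx : 1 < x) (hν : 0 < ν) :
    Gamma x * (x - 1) ^ ν ≤ Gamma (x + ν) := by
  have hx₀ : 0 < x - 1 := by linarith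
  have hlog : log (Gamma x) - log (Gamma (x - 1)) = log (x - 1) := by
    have hrec := Gamma_add_one hx₀.ne'
    rw [sub_add_cancel] at hrec
    rw [hrec, log_mul hx₀.ne' (Gamma_pos_of_pos hx₀).ne', add_sub_cancel_right]
  have hslope := convexOn_log_Gamma.slope_mono_adjacent (y := x) (Set.mem_Ioi.2 hx₀)
    (Set.mem_Ioi.2 (by linarith : 0 < x + ν)) (by linarith) (by linarith)
  simp only [Function.comp_apply, sub_sub_cancel, add_sub_cancel_left, div_one] at hslope
  rw [hlog, le_div_iff₀ hν] at hslope
  rw [← exp_log (Gamma_pos_of_pos (by linarith : 0 < x)),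
    ← exp_log (Gamma_pos_of_pos (by linarith : 0 < x + ν)), rpow_def_of_pos hx₀, ← exp_add]
  exact exp_le_exp.2 (by linarith)

theorem summable_pow_div_Gamma {ν : ℝ} (hν : 0 < ν) (y : ℝ) :
    Summable fun m : ℕ => y ^ m / Gamma (ν * m + 1) := by
  have hgrowth : Tendsto (fun m : ℕ => (ν * m) ^ ν) atTop atTop :=
    (tendsto_rpow_atTop hν).comp (tendsto_natCast_atTop_atTop.const_mul_atTop hν)
  refine summable_of_ratio_norm_eventually_le (r := 1 / 2) (by norm_num) ?_
  filter_upwards [hgrowth.eventually_ge_atTop (2 * |y|), eventually_gt_atTop 0] with m hm hm₀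
  have hνm : 0 < ν * m := mul_pos hν (Nat.cast_pos.2 hm₀)
  have hΓ : 0 < Gamma (ν * m + 1) := Gamma_pos_of_pos (by linarith)
  have hpow : 0 < (ν * m) ^ ν := rpow_pos_of_pos hνm ν
  have hratio := Gamma_mul_rpow_le_Gamma_add (by linarith : 1 < ν * m + 1) hν
  rw [add_sub_cancel_right] at hratio
  rw [norm_div, norm_div, norm_pow, norm_pow, Real.norm_eq_abs,
    Real.norm_of_nonneg (Gamma_pos_of_pos (by positivity)).le, Real.norm_of_nonneg hΓ.le,
    Nat.cast_succ,
    show ν * (m + 1) + 1 = ν * m + 1 + ν by ring]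
  calc |y| ^ (m + 1) / Gamma (ν * m + 1 + ν)
      ≤ |y| ^ (m + 1) / (Gamma (ν * m + 1) * (ν * m) ^ ν) := by gcongr
    _ = |y| / (ν * m) ^ ν * (|y| ^ m / Gamma (ν * m + 1)) := by field_simp; ring
    _ ≤ 1 / 2 * (|y| ^ m / Gamma (ν * m + 1)) := by
      refine mul_le_mul_of_nonneg_right ?_ (by positivity)
      rw [div_le_iff₀ hpow]
      linarith

theorem prod_range_natCast_add_one_add_eq_factorial_mul_choose (n r : ℕ) :
    ∏ i ∈ range r, ((n : ℝ) + 1 + i) = r.factorial * (n + r).choose n := by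
  have h := Nat.ascFactorial_eq_factorial_mul_choose n r
  rw [Nat.ascFactorial_eq_prod_range, ← Nat.choose_symm_add] at h
  exact_mod_cast h

theorem gml_eq_tsum_choose (ν y : ℝ) (n : ℕ) :
    gml ν (n * ν + 1) (n + 1) y =
      ∑' r : ℕ, ((n + r).choose n : ℝ) * y ^ r / Gamma (ν * (n + r : ℕ) + 1) := by
  refine tsum_congr fun r => ?_
  rw [prod_range_natCast_add_one_add_eq_factorial_mul_choose,
    show ν * r + (n * ν + 1) = ν * (n + r : ℕ) + 1 by push_cast; ring, mul_assoc,
    mul_div_mul_left _ _ (Nat.cast_ne_zero.2 r.factorial_ne_zero)]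

theorem sum_antidiagonal_choose_mul_pow_mul_pow {R : Type*} [CommSemiring R] (a b : R)
    (w : ℕ → R) (m : ℕ) :
    ∑ p ∈ antidiagonal m, ((p.1 + p.2).choose p.1 : R) * a ^ p.1 * b ^ p.2 * w (p.1 + p.2) =
      (a + b) ^ m * w m := by
  rw [(Commute.all a b).add_pow', sum_mul]
  refine sum_congr rfl fun p hp => ?_
  rw [mem_antidiagonal.1 hp, nsmul_eq_mul]
  ring

theorem summable_of_summable_sum_antidiagonal_abs {F : ℕ × ℕ → ℝ}
    (h : Summable fun m => ∑ p ∈ antidiagonal m, |F p|) : Summable F := by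
  rw [← summable_abs_iff, ← HasAntidiagonal.sigmaAntidiagonalEquivProd.summable_iff]
  refine (summable_sigma_of_nonneg fun _ => abs_nonneg _).2 ⟨fun _ => .of_finite, ?_⟩
  simpa only [Function.comp_apply, HasAntidiagonal.sigmaAntidiagonalEquivProd_apply,
    Finset.tsum_subtype (f := fun p => |F p|)] using h

theorem Summable.tsum_eq_tsum_sum_antidiagonal {F : ℕ × ℕ → ℝ} (hF : Summable F) :
    ∑' p, F p = ∑' m, ∑ p ∈ antidiagonal m, F p := by
  have hσ : Summable fun c => F (HasAntidiagonal.sigmaAntidiagonalEquivProd c) :=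
    HasAntidiagonal.sigmaAntidiagonalEquivProd.summable_iff.2 hF
  rw [← HasAntidiagonal.sigmaAntidiagonalEquivProd.tsum_eq, hσ.tsum_sigma' fun _ => .of_finite]
  simp only [HasAntidiagonal.sigmaAntidiagonalEquivProd_apply, Finset.tsum_subtype (f := F)]

theorem hasSum_tsum_choose_mul_pow_mul_pow {a b : ℝ} {w : ℕ → ℝ}
    (hw : Summable fun m => (|a| + |b|) ^ m * |w m|) :
    HasSum (fun n => ∑' r, ((n + r).choose n : ℝ) * a ^ n * b ^ r * w (n + r))
      (∑' m, (a + b) ^ m * w m) := by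
  set F : ℕ × ℕ → ℝ := fun p => ((p.1 + p.2).choose p.1 : ℝ) * a ^ p.1 * b ^ p.2 * w (p.1 + p.2)
  have habs : ∀ p, |F p| =
      ((p.1 + p.2).choose p.1 : ℝ) * |a| ^ p.1 * |b| ^ p.2 * |w (p.1 + p.2)| := fun p => by
    simp only [F, abs_mul, abs_pow, Nat.abs_cast]
  have hF : Summable F := summable_of_summable_sum_antidiagonal_abs <| hw.congr fun m => by
    simp only [habs]
    exact (sum_antidiagonal_choose_mul_pow_mul_pow |a| |b| (fun m => |w m|) m).symm
  have hsum := hF.prod.hasSum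
  rwa [← hF.tsum_prod, hF.tsum_eq_tsum_sum_antidiagonal,
    funext (sum_antidiagonal_choose_mul_pow_mul_pow a b w)] at hsum

theorem hasSum_pow_mul_gml {ν : ℝ} (hν : 0 < ν) (x z : ℝ) :
    HasSum (fun n : ℕ => z ^ n * (x ^ n * gml ν (n * ν + 1) (n + 1) (-x)))
      (ml ν 1 (-(x * (1 - z)))) := by
  have hw : Summable fun m : ℕ => (|z * x| + |-x|) ^ m * |(Gamma (ν * m + 1))⁻¹| := by
    refine (summable_pow_div_Gamma hν (|z * x| + |-x|)).congr fun m => ?_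
    rw [abs_of_pos (inv_pos.2 (Gamma_pos_of_pos (by positivity))), div_eq_mul_inv]
  convert hasSum_tsum_choose_mul_pow_mul_pow hw using 1
  · funext n
    rw [gml_eq_tsum_choose, ← tsum_mul_left, ← tsum_mul_left]
    refine tsum_congr fun r => ?_
    ring
  · rw [ml, show z * x + -x = -(x * (1 - z)) by ring]
    simp only [div_eq_mul_inv]

-- `(s+1)/(2s) * s^n + (s-1)/(2s) * (-s)^n = s^(2k)` for `n = 2k` and for `n = 2k + 1`.
theorem hasSum_sq_pow_mul_add_of_hasSum {s A B : ℝ} (hs : s ≠ 0) {a : ℕ → ℝ}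
    (hA : HasSum (fun n => s ^ n * a n) A) (hB : HasSum (fun n => (-s) ^ n * a n) B) :
    HasSum (fun k => (s ^ 2) ^ k * (a (2 * k) + a (2 * k + 1)))
      ((s + 1) / (2 * s) * A + (s - 1) / (2 * s) * B) := by
  set g : ℕ → ℝ := fun n =>
    (s + 1) / (2 * s) * (s ^ n * a n) + (s - 1) / (2 * s) * ((-s) ^ n * a n)
  have hg : HasSum g _ := (hA.mul_left _).add (hB.mul_left _)
  have heven : Summable fun k => g (2 * k) :=
    hg.summable.comp_injective (mul_right_injective₀ two_ne_zero)
  have hodd : Summable fun k => g (2 * k + 1) :=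
    hg.summable.comp_injective fun p q h => by omega
  have hpair : ∀ k, g (2 * k) + g (2 * k + 1) = (s ^ 2) ^ k * (a (2 * k) + a (2 * k + 1)) := by
    intro k
    simp only [g, pow_succ, pow_mul]
    field_simp
    ring
  rw [← hg.tsum_eq, ← tsum_even_add_odd heven hodd]
  simpa only [hpair] using heven.hasSum.add hodd.hasSum

theorem second_type_pgf_general (ν lam t u : ℝ) (hν : 0 < ν)
    (ht : 0 < t) (hu : 0 < u) :
    ∑' k : ℕ, u ^ k *
        (lam ^ (2 * k) * t ^ ((2 * k : ℕ) * ν) *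
            gml ν (2 * k * ν + 1) (2 * k + 1) (-(lam * t ^ ν))
          + lam ^ (2 * k + 1) * t ^ ((2 * k + 1 : ℕ) * ν) *
            gml ν ((2 * k + 1) * ν + 1) (2 * k + 2) (-(lam * t ^ ν)))
      = (Real.sqrt u + 1) / (2 * Real.sqrt u) *
          ml ν 1 (-(lam * (1 - Real.sqrt u) * t ^ ν))
        + (Real.sqrt u - 1) / (2 * Real.sqrt u) *
          ml ν 1 (-(lam * (1 + Real.sqrt u) * t ^ ν)) := by
  set x := lam * t ^ ν
  have hpow : ∀ m : ℕ, lam ^ m * t ^ ((m : ℝ) * ν) = x ^ m := fun m => by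
    rw [mul_comm (m : ℝ), rpow_mul_natCast ht.le, ← mul_pow]
  have hsplit := hasSum_sq_pow_mul_add_of_hasSum (sqrt_pos.2 hu).ne'
    (hasSum_pow_mul_gml hν x (√u)) (hasSum_pow_mul_gml hν x (-√u))
  rw [sq_sqrt hu.le, sub_neg_eq_add] at hsplit
  convert hsplit.tsum_eq using 3 with k
  · rw [hpow, hpow]
    push_cast
    ring_nf
  all_goals congr 1; ring

/-- Probability generating function of the second-type fractional Poisson distribution:
for `ν ∈ (0,1]`, `λ > 0`, `t > 0`, `0 < u ≤ 1`,
`Σ_{k=0}^∞ u^k p̂_k^ν(t) = ((√u+1)/(2√u)) E_{ν,1}(-λ(1-√u)t^ν)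
  + ((√u-1)/(2√u)) E_{ν,1}(-λ(1+√u)t^ν)`, where
`p̂_k^ν(t) = λ^{2k} t^{2kν} E_{ν,2kν+1}^{2k+1}(-λt^ν)
  + λ^{2k+1} t^{(2k+1)ν} E_{ν,(2k+1)ν+1}^{2k+2}(-λt^ν)`. -/
theorem second_type_pgf (ν lam t u : ℝ) (hν : 0 < ν) (hν1 : ν ≤ 1)
    (hlam : 0 < lam) (ht : 0 < t) (hu : 0 < u) (hu1 : u ≤ 1) :
    ∑' k : ℕ, u ^ k *
        (lam ^ (2 * k) * t ^ ((2 * k : ℕ) * ν) *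
            gml ν (2 * k * ν + 1) (2 * k + 1) (-(lam * t ^ ν))
          + lam ^ (2 * k + 1) * t ^ ((2 * k + 1 : ℕ) * ν) *
            gml ν ((2 * k + 1) * ν + 1) (2 * k + 2) (-(lam * t ^ ν)))
      = (Real.sqrt u + 1) / (2 * Real.sqrt u) *
          ml ν 1 (-(lam * (1 - Real.sqrt u) * t ^ ν))
        + (Real.sqrt u - 1) / (2 * Real.sqrt u) *
          ml ν 1 (-(lam * (1 + Real.sqrt u) * t ^ ν)) :=
  second_type_pgf_general ν lam t u hν ht hu
end

section
/- For λ > 0 and every integer k ≥ 0, the functions p̂_k(t) = ((λt)^{2k}/(2k)!) e^{-λt} + ((λt)^{2k+1}/(2k+1)!) e^{-λt}, with the convention p̂_{-1}(t) = 0, satisfy for all t > 0 the second-order recursive differential equation d²p̂_k/dt² + 2λ dp̂_k/dt = -λ²(p̂_k - p̂_{k-1}), together with the initial conditions p̂_0(0) = 1, p̂_k(0) = 0 for k ≥ 1, and p̂_k'(0) = 0 for all k ≥ 0. -/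
/-!
Write `q n t = (λt)ⁿ/n! · e^{-λt}` for the Poisson weights, so that `p̂_k = q (2k) + q (2k+1)`.
They satisfy `(d/dt + λ) q 0 = 0` and `(d/dt + λ) q (n+1) = λ q n`, hence
`(d/dt + λ)² p̂_k = λ² p̂_{k-1}` (and `= 0` for `k = 0`), which is the stated equation
`p̂_k'' + 2λ p̂_k' + λ² p̂_k = λ² p̂_{k-1}`. The initial values come from `0ⁿ = 0` for `n ≥ 1`.
-/

open Real

noncomputable def poissonTerm (lam : ℝ) (n : ℕ) (t : ℝ) : ℝ :=
  (lam * t) ^ n / n.factorial * exp (-(lam * t))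

noncomputable def pairedPoisson (lam : ℝ) (k : ℕ) (t : ℝ) : ℝ :=
  poissonTerm lam (2 * k) t + poissonTerm lam (2 * k + 1) t

section Derivatives

variable (lam t : ℝ)

lemma hasDerivAt_exp_neg_mul :
    HasDerivAt (fun t => exp (-(lam * t))) (-lam * exp (-(lam * t))) t := by
  have hlin : HasDerivAt (fun t : ℝ => -(lam * t)) (-lam) t :=
    ((hasDerivAt_id t).const_mul lam).neg.congr_deriv (by simp)
  exact ((Real.hasDerivAt_exp _).comp t hlin).congr_deriv (by ring)

lemma hasDerivAt_poissonTerm_zero :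
    HasDerivAt (poissonTerm lam 0) (-lam * poissonTerm lam 0 t) t := by
  have hterm : poissonTerm lam 0 = fun t => exp (-(lam * t)) := by
    ext; simp [poissonTerm]
  simpa [hterm] using hasDerivAt_exp_neg_mul lam t

lemma hasDerivAt_poissonTerm_succ (n : ℕ) :
    HasDerivAt (poissonTerm lam (n + 1))
      (lam * poissonTerm lam n t - lam * poissonTerm lam (n + 1) t) t := by
  have hpow : HasDerivAt (fun t : ℝ => (lam * t) ^ (n + 1)) ((n + 1) * (lam * t) ^ n * lam) t :=
    (((hasDerivAt_id t).const_mul lam).pow (n + 1)).congr_deriv (by simp)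
  refine ((hpow.div_const _).mul (hasDerivAt_exp_neg_mul lam t)).congr_deriv ?_
  have hfact : ((n + 1).factorial : ℝ) = (n + 1) * n.factorial := by
    push_cast [Nat.factorial_succ]; ring
  simp only [poissonTerm, hfact]
  field_simp
  ring

lemma hasDerivAt_pairedPoisson_zero :
    HasDerivAt (pairedPoisson lam 0) (-lam * poissonTerm lam 1 t) t :=
  ((hasDerivAt_poissonTerm_zero lam t).add (hasDerivAt_poissonTerm_succ lam t 0)).congr_deriv
    (by ring)

lemma hasDerivAt_pairedPoisson_succ (m : ℕ) :
    HasDerivAt (pairedPoisson lam (m + 1))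
      (lam * poissonTerm lam (2 * m + 1) t - lam * poissonTerm lam (2 * m + 3) t) t :=
  ((hasDerivAt_poissonTerm_succ lam t (2 * m + 1)).add
    (hasDerivAt_poissonTerm_succ lam t (2 * m + 2))).congr_deriv (by ring)

end Derivatives

section Ode

variable (lam : ℝ)

lemma pairedPoisson_zero_ode (t : ℝ) :
    deriv (deriv (pairedPoisson lam 0)) t + 2 * lam * deriv (pairedPoisson lam 0) t
      = -lam ^ 2 * pairedPoisson lam 0 t := by
  have hderiv : deriv (pairedPoisson lam 0) = fun t => -lam * poissonTerm lam 1 t :=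
    funext fun t => (hasDerivAt_pairedPoisson_zero lam t).deriv
  have hderiv2 : HasDerivAt (deriv (pairedPoisson lam 0))
      (-lam * (lam * poissonTerm lam 0 t - lam * poissonTerm lam 1 t)) t := by
    rw [hderiv]
    exact (hasDerivAt_poissonTerm_succ lam t 0).const_mul (-lam)
  rw [hderiv2.deriv, hderiv]
  simp only [pairedPoisson]
  ring

lemma pairedPoisson_succ_ode (m : ℕ) (t : ℝ) :
    deriv (deriv (pairedPoisson lam (m + 1))) t + 2 * lam * deriv (pairedPoisson lam (m + 1)) t
      = -lam ^ 2 * (pairedPoisson lam (m + 1) t - pairedPoisson lam m t) := by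
  have hderiv : deriv (pairedPoisson lam (m + 1))
      = fun t => lam * poissonTerm lam (2 * m + 1) t - lam * poissonTerm lam (2 * m + 3) t :=
    funext fun t => (hasDerivAt_pairedPoisson_succ lam t m).deriv
  have hderiv2 : HasDerivAt (deriv (pairedPoisson lam (m + 1)))
      (lam * (lam * poissonTerm lam (2 * m) t - lam * poissonTerm lam (2 * m + 1) t)
        - lam * (lam * poissonTerm lam (2 * m + 2) t - lam * poissonTerm lam (2 * m + 3) t)) t := by
    rw [hderiv]
    exact ((hasDerivAt_poissonTerm_succ lam t (2 * m)).const_mul lam).sub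
      ((hasDerivAt_poissonTerm_succ lam t (2 * m + 2)).const_mul lam)
  rw [hderiv2.deriv, hderiv]
  simp only [pairedPoisson, show 2 * (m + 1) = 2 * m + 2 by ring]
  ring

end Ode

section InitialValues

variable (lam : ℝ)

lemma poissonTerm_at_zero {n : ℕ} (hn : n ≠ 0) : poissonTerm lam n 0 = 0 := by
  simp [poissonTerm, hn]

lemma pairedPoisson_zero_at_zero : pairedPoisson lam 0 0 = 1 := by
  simp [pairedPoisson, poissonTerm]

lemma pairedPoisson_at_zero {k : ℕ} (hk : k ≠ 0) : pairedPoisson lam k 0 = 0 := by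
  simp [pairedPoisson, poissonTerm_at_zero, hk]

lemma deriv_pairedPoisson_at_zero (k : ℕ) : deriv (pairedPoisson lam k) 0 = 0 := by
  rcases k with _ | m
  · simp [(hasDerivAt_pairedPoisson_zero lam 0).deriv, poissonTerm_at_zero]
  · simp [(hasDerivAt_pairedPoisson_succ lam 0 m).deriv, poissonTerm_at_zero]

end InitialValues

theorem second_order_poisson_equation_general (lam : ℝ)
    (p : ℕ → ℝ → ℝ)
    (hp : ∀ k t, p k t =
      (lam * t) ^ (2 * k) / (2 * k).factorial * Real.exp (-(lam * t))
        + (lam * t) ^ (2 * k + 1) / (2 * k + 1).factorial * Real.exp (-(lam * t))) :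
    (∀ k : ℕ, ∀ t : ℝ, 0 < t →
        deriv (deriv (p k)) t + 2 * lam * deriv (p k) t
          = -lam ^ 2 * (p k t - if k = 0 then 0 else p (k - 1) t))
      ∧ p 0 0 = 1
      ∧ (∀ k : ℕ, 1 ≤ k → p k 0 = 0)
      ∧ (∀ k : ℕ, deriv (p k) 0 = 0) := by
  obtain rfl : p = pairedPoisson lam := funext fun k => funext (hp k)
  refine ⟨fun k t _ => ?_, pairedPoisson_zero_at_zero lam,
    fun k hk => pairedPoisson_at_zero lam (by omega), deriv_pairedPoisson_at_zero lam⟩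
  rcases k with _ | m
  · simpa using pairedPoisson_zero_ode lam t
  · simpa using pairedPoisson_succ_ode lam m t

/-- For `λ > 0`, the functions
`p̂_k(t) = ((λt)^{2k}/(2k)!) e^{-λt} + ((λt)^{2k+1}/(2k+1)!) e^{-λt}`
(with the convention `p̂_{-1} = 0`) satisfy, for all `t > 0`, the second-order
recursive differential equation
`p̂_k'' + 2λ p̂_k' = -λ²(p̂_k - p̂_{k-1})`, together with the initial conditions
`p̂_0(0) = 1`, `p̂_k(0) = 0` for `k ≥ 1`, and `p̂_k'(0) = 0` for all `k ≥ 0`. -/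
theorem second_order_poisson_equation (lam : ℝ) (hlam : 0 < lam)
    (p : ℕ → ℝ → ℝ)
    (hp : ∀ k t, p k t =
      (lam * t) ^ (2 * k) / (2 * k).factorial * Real.exp (-(lam * t))
        + (lam * t) ^ (2 * k + 1) / (2 * k + 1).factorial * Real.exp (-(lam * t))) :
    (∀ k : ℕ, ∀ t : ℝ, 0 < t →
        deriv (deriv (p k)) t + 2 * lam * deriv (p k) t
          = -lam ^ 2 * (p k t - if k = 0 then 0 else p (k - 1) t))
      ∧ p 0 0 = 1
      ∧ (∀ k : ℕ, 1 ≤ k → p k 0 = 0)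
      ∧ (∀ k : ℕ, deriv (p k) 0 = 0) :=
  second_order_poisson_equation_general lam p hp
end
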